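/- In a non-degenerate RiFle assignment game, the set of stable outcomes is a lattice under the partial order of P-preferences: for any two stable outcomes μ and μ', the payoff given by ǔ_i = max(u_i,u'_i), v̌_j = min(v_j,v'_j) is a stable payoff (and dually for the meet with min/max swapped). -/

import Mathlib

open Finset

/-- The RiFle assignment game: `n` P-agents and `n` Q-agents, prescribed payoff
shares `β i j` (to `p i`) and `γ i j` (to `q j`), each agent rigid or flexible. -/
structure RiFle (n : ℕ) where
  β : Fin n → Fin n → ℝ
  γ : Fin n → Fin n → ℝ
  β_nonneg : ∀ i j, 0 ≤ β i j
  γ_nonneg : ∀ i j, 0 ≤ γ i j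
  rigidP : Fin n → Prop
  rigidQ : Fin n → Prop

namespace RiFle

variable {n : ℕ}

/-- Joint productivity of a pair. -/
def α (G : RiFle n) (i j : Fin n) : ℝ := G.β i j + G.γ i j

/-- A pair is rigid if at least one of its members is rigid. -/
def RigidPair (G : RiFle n) (i j : Fin n) : Prop := G.rigidP i ∨ G.rigidQ j

/-- A (partial) matching of P-agents to Q-agents, given as a partial map from P to Q
that is injective on matched agents. -/
def Matching (μ : Fin n → Option (Fin n)) : Prop :=
  ∀ i i' j, μ i = some j → μ i' = some j → i = i'

/-- Feasibility of an outcome: individual rationality, rigidity, and Pareto optimality. -/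
def Feasible (G : RiFle n) (μ : Fin n → Option (Fin n)) (u v : Fin n → ℝ) : Prop :=
  Matching μ ∧
  (∀ i, 0 ≤ u i) ∧ (∀ j, 0 ≤ v j) ∧
  (∀ i j, μ i = some j → G.rigidP i → u i = G.β i j ∧ (¬ G.rigidQ j → G.γ i j ≤ v j)) ∧
  (∀ i j, μ i = some j → G.rigidQ j → v j = G.γ i j ∧ (¬ G.rigidP i → G.β i j ≤ u i)) ∧
  ((∑ i, u i) + (∑ j, v j) = ∑ i, (μ i).elim 0 (fun j => G.α i j))

/-- Stability: feasibility plus absence of blocking pairs. -/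
def Stable (G : RiFle n) (μ : Fin n → Option (Fin n)) (u v : Fin n → ℝ) : Prop :=
  G.Feasible μ u v ∧
  (∀ i j, ¬ G.RigidPair i j → G.α i j ≤ u i + v j) ∧
  (∀ i j, G.RigidPair i j → G.β i j ≤ u i ∨ G.γ i j ≤ v j)

end RiFle
namespace RiFle

variable {n : ℕ}

/-- The total payoff to a coalition `(CP, CQ)` under `μ` is forced if every matched
pair crossing the boundary of the coalition is rigid. -/
def Forced (G : RiFle n) (μ : Fin n → Option (Fin n)) (CP CQ : Finset (Fin n)) : Prop :=
  ∀ i j, μ i = some j → ((i ∈ CP ∧ j ∉ CQ) ∨ (i ∉ CP ∧ j ∈ CQ)) → G.RigidPair i j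

/-- The forced total payoff to a coalition. -/
def ForcedPay (G : RiFle n) (μ : Fin n → Option (Fin n)) (CP CQ : Finset (Fin n)) : ℝ :=
  (∑ i ∈ CP, (μ i).elim 0 (fun j => G.β i j)) +
  (∑ i : Fin n, (μ i).elim 0 (fun j => if j ∈ CQ then G.γ i j else 0))

/-- Non-degeneracy: for any two matchings and any minimal nonempty coalition whose
payoff is forced under both, equality of the forced payoffs implies that the two
matchings coincide on the coalition. -/
def NonDegenerate (G : RiFle n) : Prop :=
  ∀ (μ μ' : Fin n → Option (Fin n)) (CP CQ : Finset (Fin n)),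
    Matching μ → Matching μ' →
    G.Forced μ CP CQ → G.Forced μ' CP CQ →
    (CP.Nonempty ∨ CQ.Nonempty) →
    (∀ CP' CQ' : Finset (Fin n), CP' ⊆ CP → CQ' ⊆ CQ → (CP' ≠ CP ∨ CQ' ≠ CQ) →
      (CP'.Nonempty ∨ CQ'.Nonempty) → ¬ (G.Forced μ CP' CQ' ∧ G.Forced μ' CP' CQ')) →
    G.ForcedPay μ CP CQ = G.ForcedPay μ' CP CQ →
    (∀ i ∈ CP, μ i = μ' i) ∧ (∀ i j, j ∈ CQ → (μ i = some j ↔ μ' i = some j))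

end RiFle

namespace RiFle

open Finset

variable {n : ℕ}

open Classical in
lemma sum_elim_count (ν : Fin n → Option (Fin n)) (hm : Matching ν) (f : Fin n → ℝ) :
    ∑ i, (ν i).elim 0 (fun j => f j) = ∑ j, if ∃ i, ν i = some j then f j else 0 := by
  classical
  have step1 : ∀ i, (ν i).elim 0 (fun j => f j) = ∑ j, if ν i = some j then f j else 0 := by
    intro i
    cases hν : ν i with
    | none => simp [hν]
    | some j₀ =>
      simp only [hν, Option.elim]
      rw [Finset.sum_congr rfl (g := fun j => if j = j₀ then f j else 0)
        (fun j _ => by simp [eq_comm])]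
      simp
  have step2 : ∀ j, (∑ i, if ν i = some j then f j else 0) =
      if ∃ i, ν i = some j then f j else 0 := by
    intro j
    by_cases hex : ∃ i, ν i = some j
    · obtain ⟨i₀, hi₀⟩ := hex
      rw [Finset.sum_eq_single i₀]
      · rw [if_pos hi₀, if_pos (⟨i₀, hi₀⟩ : ∃ i, ν i = some j)]
      · intro i _ hne
        have : ν i ≠ some j := fun hc => hne (hm i i₀ j hc hi₀)
        simp [this]
      · intro hc; exact absurd (Finset.mem_univ i₀) hc
    · rw [if_neg hex]
      apply Finset.sum_eq_zero
      intro i _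
      have : ν i ≠ some j := fun hc => hex ⟨i, hc⟩
      simp [this]
  calc ∑ i, (ν i).elim 0 (fun j => f j) = ∑ i, ∑ j, if ν i = some j then f j else 0 := by
        exact Finset.sum_congr rfl (fun i _ => step1 i)
    _ = ∑ j, ∑ i, if ν i = some j then f j else 0 := Finset.sum_comm
    _ = _ := Finset.sum_congr rfl (fun j _ => step2 j)

open Classical in
lemma sum_elim_eq (ν : Fin n → Option (Fin n)) (hm : Matching ν) (f : Fin n → ℝ)
    (hf : ∀ j, (∀ i, ν i ≠ some j) → f j = 0) :
    ∑ i, (ν i).elim 0 (fun j => f j) = ∑ j, f j := by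
  rw [sum_elim_count ν hm f]
  refine Finset.sum_congr rfl (fun j _ => ?_)
  by_cases hex : ∃ i, ν i = some j
  · simp [hex]
  · push_neg at hex
    simp [hf j hex, hex]

theorem stable_facts (G : RiFle n) {μ : Fin n → Option (Fin n)} {u v : Fin n → ℝ}
    (h : G.Stable μ u v) :
    (∀ i j, μ i = some j → u i + v j = G.α i j) ∧
    (∀ i, μ i = none → u i = 0) ∧
    (∀ j, (∀ i, μ i ≠ some j) → v j = 0) := by
  classical
  obtain ⟨⟨hm, hu, hv, hrp, hrq, hsum⟩, hb1, hb2⟩ := h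
  have key : ∀ i j, μ i = some j → G.α i j ≤ u i + v j := by
    intro i j hij
    by_cases hP : G.rigidP i
    · obtain ⟨hue, hγ⟩ := hrp i j hij hP
      by_cases hQ : G.rigidQ j
      · obtain ⟨hve, _⟩ := hrq i j hij hQ
        simp [α, hue, hve, le_refl]
      · have := hγ hQ
        rw [α, hue]; linarith
    · by_cases hQ : G.rigidQ j
      · obtain ⟨hve, hβ⟩ := hrq i j hij hQ
        have := hβ hP
        rw [α, hve]; linarith
      · exact hb1 i j (by simp [RigidPair, hP, hQ])
  set T : Fin n → ℝ := fun i =>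
    (μ i).elim 0 (fun j => u i + v j) - (μ i).elim 0 (fun j => G.α i j) with hT
  set S2 : Fin n → ℝ := fun i => if μ i = none then u i else 0 with hS2
  set S3 : Fin n → ℝ := fun j => if (∀ i, μ i ≠ some j) then v j else 0 with hS3
  have hTnn : ∀ i, 0 ≤ T i := by
    intro i
    cases hν : μ i with
    | none => simp [hT, hν]
    | some j => simp only [hT, hν, Option.elim]; have := key i j hν; linarith
  have hS2nn : ∀ i, 0 ≤ S2 i := by
    intro i; simp only [hS2]; split <;> [exact hu i; exact le_refl 0]
  have hS3nn : ∀ j, 0 ≤ S3 j := by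
    intro j; simp only [hS3]; split <;> [exact hv j; exact le_refl 0]
  have hu_split : ∑ i, u i = (∑ i, (μ i).elim 0 (fun _ => u i)) + ∑ i, S2 i := by
    rw [← Finset.sum_add_distrib]
    refine Finset.sum_congr rfl (fun i _ => ?_)
    cases hν : μ i <;> simp [hS2, hν]
  have hv_split : ∑ j, v j = (∑ i, (μ i).elim 0 (fun j => v j)) + ∑ j, S3 j := by
    rw [sum_elim_count μ hm v, ← Finset.sum_add_distrib]
    refine Finset.sum_congr rfl (fun j _ => ?_)
    by_cases hex : ∃ i, μ i = some j
    · have : ¬ (∀ i, μ i ≠ some j) := by push_neg; exact hex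
      simp [hS3, hex, this]
    · have hall : ∀ i, μ i ≠ some j := by push_neg at hex; exact hex
      simp [hS3, hex, hall]
  have hcomb : ∀ i, (μ i).elim 0 (fun _ => u i) + (μ i).elim 0 (fun j => v j)
      = (μ i).elim 0 (fun j => u i + v j) := by
    intro i; cases hν : μ i <;> simp [hν]
  have htotal : (∑ i, T i) + (∑ i, S2 i) + (∑ j, S3 j) = 0 := by
    have h1 : ∑ i, T i = (∑ i, (μ i).elim 0 (fun j => u i + v j))
        - ∑ i, (μ i).elim 0 (fun j => G.α i j) := by
      simp [hT, Finset.sum_sub_distrib]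
    have h2 : ∑ i, (μ i).elim 0 (fun j => u i + v j)
        = (∑ i, (μ i).elim 0 (fun _ => u i)) + ∑ i, (μ i).elim 0 (fun j => v j) := by
      rw [← Finset.sum_add_distrib]
      exact Finset.sum_congr rfl (fun i _ => (hcomb i).symm)
    have := hsum
    rw [hu_split, hv_split] at this
    rw [h1, h2]
    linarith
  have hTz : ∀ i, T i = 0 := by
    have hsum1 : ∑ i, T i = 0 := by
      have n1 : 0 ≤ ∑ i, T i := Finset.sum_nonneg (fun i _ => hTnn i)
      have n2 : 0 ≤ ∑ i, S2 i := Finset.sum_nonneg (fun i _ => hS2nn i)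
      have n3 : 0 ≤ ∑ j, S3 j := Finset.sum_nonneg (fun j _ => hS3nn j)
      linarith
    intro i
    have := (Finset.sum_eq_zero_iff_of_nonneg (fun i _ => hTnn i)).1 hsum1
    exact this i (Finset.mem_univ i)
  have hS2z : ∀ i, S2 i = 0 := by
    have hsum2 : ∑ i, S2 i = 0 := by
      have n1 : 0 ≤ ∑ i, T i := Finset.sum_nonneg (fun i _ => hTnn i)
      have n2 : 0 ≤ ∑ i, S2 i := Finset.sum_nonneg (fun i _ => hS2nn i)
      have n3 : 0 ≤ ∑ j, S3 j := Finset.sum_nonneg (fun j _ => hS3nn j)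
      have h1 : ∑ i, T i = 0 := by linarith
      linarith
    intro i
    exact (Finset.sum_eq_zero_iff_of_nonneg (fun i _ => hS2nn i)).1 hsum2 i (Finset.mem_univ i)
  have hS3z : ∀ j, S3 j = 0 := by
    have hsum3 : ∑ j, S3 j = 0 := by
      have n1 : ∑ i, T i = 0 := Finset.sum_eq_zero (fun i _ => hTz i)
      have n2 : ∑ i, S2 i = 0 := Finset.sum_eq_zero (fun i _ => hS2z i)
      linarith
    intro j
    exact (Finset.sum_eq_zero_iff_of_nonneg (fun j _ => hS3nn j)).1 hsum3 j (Finset.mem_univ j)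
  refine ⟨?_, ?_, ?_⟩
  · intro i j hij
    have := hTz i
    simp only [hT, hij, Option.elim] at this
    linarith
  · intro i hi
    have := hS2z i
    simpa [hS2, hi] using this
  · intro j hj
    have := hS3z j
    simpa [hS3, hj] using this

theorem stable_rigid_split (G : RiFle n) {μ : Fin n → Option (Fin n)} {u v : Fin n → ℝ}
    (h : G.Stable μ u v) :
    ∀ i j, μ i = some j → G.RigidPair i j → u i = G.β i j ∧ v j = G.γ i j := by
  intro i j hij hrig
  have hfacts := stable_facts G h
  have hαeq := hfacts.1 i j hij
  obtain ⟨⟨hm, hu, hv, hrp, hrq, hsum⟩, hb1, hb2⟩ := h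
  rcases hrig with hP | hQ
  · have hue := (hrp i j hij hP).1
    refine ⟨hue, ?_⟩
    rw [α] at hαeq; linarith [hαeq, hue]
  · have hve := (hrq i j hij hQ).1
    refine ⟨?_, hve⟩
    rw [α] at hαeq; linarith

end RiFle
namespace RiFle

open Finset

variable {n : ℕ}

theorem forcedPay_eq (G : RiFle n) {μ : Fin n → Option (Fin n)} {u v : Fin n → ℝ}
    (h : G.Stable μ u v) {CP CQ : Finset (Fin n)} (hF : G.Forced μ CP CQ) :
    G.ForcedPay μ CP CQ = (∑ i ∈ CP, u i) + (∑ j ∈ CQ, v j) := by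
  classical
  have facts := stable_facts G h
  have hm : Matching μ := h.1.1
  set E : Fin n → ℝ := fun i =>
    (μ i).elim 0 (fun j => if j ∈ CQ then v j - G.γ i j else 0) with hE
  have claimA : ∀ i ∈ CP, (μ i).elim 0 (fun j => G.β i j) = u i + E i := by
    intro i hi
    cases hν : μ i with
    | none => simp [hE, hν, facts.2.1 i hν]
    | some j =>
      by_cases hjq : j ∈ CQ
      · have hα := facts.1 i j hν
        simp only [hE, hν, Option.elim, if_pos hjq]
        rw [α] at hα; linarith
      · have hrig := hF i j hν (Or.inl ⟨hi, hjq⟩)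
        have := (stable_rigid_split G h i j hν hrig).1
        simp [hE, hν, hjq, this]
  have claimC : ∀ i ∈ (univ : Finset (Fin n)), i ∉ CP → E i = 0 := by
    intro i _ hi
    cases hν : μ i with
    | none => simp [hE, hν]
    | some j =>
      by_cases hjq : j ∈ CQ
      · have hrig := hF i j hν (Or.inr ⟨hi, hjq⟩)
        have := (stable_rigid_split G h i j hν hrig).2
        simp [hE, hν, hjq, this]
      · simp [hE, hν, hjq]
  have hv_eq : ∑ j ∈ CQ, v j = ∑ i, (μ i).elim 0 (fun j => if j ∈ CQ then v j else 0) := by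
    rw [sum_elim_eq μ hm _ (fun j hj => by
      by_cases hjq : j ∈ CQ <;> simp [facts.2.2 j hj, hjq])]
    rw [← Finset.sum_filter]
    congr 1
    ext j; simp
  have hγv : ∀ i, (μ i).elim 0 (fun j => if j ∈ CQ then G.γ i j else 0)
      = (μ i).elim 0 (fun j => if j ∈ CQ then v j else 0) - E i := by
    intro i
    cases hν : μ i with
    | none => simp [hE, hν]
    | some j =>
      by_cases hjq : j ∈ CQ <;> simp [hE, hν, hjq]
  have hEsum : ∑ i, E i = ∑ i ∈ CP, E i :=
    (Finset.sum_subset (Finset.subset_univ CP) (fun i hi hip => claimC i hi hip)).symm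
  unfold ForcedPay
  rw [Finset.sum_congr rfl claimA, Finset.sum_congr rfl (fun i _ => hγv i),
    Finset.sum_add_distrib, Finset.sum_sub_distrib, ← hv_eq, hEsum]
  ring

lemma Forced.sdiff_of {G : RiFle n} {μ : Fin n → Option (Fin n)} {CP CQ CP' CQ' : Finset (Fin n)}
    (h : G.Forced μ CP CQ) (h' : G.Forced μ CP' CQ')
    (hP : CP' ⊆ CP) (hQ : CQ' ⊆ CQ) : G.Forced μ (CP \ CP') (CQ \ CQ') := by
  intro i j hij hcross
  rcases hcross with ⟨hi, hj⟩ | ⟨hi, hj⟩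
  · rw [Finset.mem_sdiff] at hi
    by_cases hjq : j ∈ CQ'
    · exact h' i j hij (Or.inr ⟨hi.2, hjq⟩)
    · have : j ∉ CQ := fun hc => hj (Finset.mem_sdiff.2 ⟨hc, hjq⟩)
      exact h i j hij (Or.inl ⟨hi.1, this⟩)
  · rw [Finset.mem_sdiff] at hj
    by_cases hip : i ∈ CP'
    · exact h' i j hij (Or.inl ⟨hip, hj.2⟩)
    · have : i ∉ CP := fun hc => hi (Finset.mem_sdiff.2 ⟨hc, hip⟩)
      exact h i j hij (Or.inr ⟨this, hj.1⟩)

theorem lemD (G : RiFle n) (hnd : G.NonDegenerate)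
    {μ μ' : Fin n → Option (Fin n)} {u v u' v' : Fin n → ℝ}
    (h : G.Stable μ u v) (h' : G.Stable μ' u' v') :
    ∀ N (CP CQ : Finset (Fin n)), CP.card + CQ.card ≤ N →
      G.Forced μ CP CQ → G.Forced μ' CP CQ →
      (∀ i ∈ CP, u i = u' i) → (∀ j ∈ CQ, v j = v' j) →
      (∀ i ∈ CP, μ i = μ' i) ∧ (∀ i j, j ∈ CQ → (μ i = some j ↔ μ' i = some j)) := by
  classical
  intro N
  induction N with
  | zero =>
    intro CP CQ hcard _ _ _ _
    have hP : CP = ∅ := Finset.card_eq_zero.1 (by omega)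
    have hQ : CQ = ∅ := Finset.card_eq_zero.1 (by omega)
    simp [hP, hQ]
  | succ N ih =>
    intro CP CQ hcard hF hF' hzp hzq
    by_cases hne : CP = ∅ ∧ CQ = ∅
    · simp [hne.1, hne.2]
    · have hnonempty : CP.Nonempty ∨ CQ.Nonempty := by
        rcases not_and_or.1 hne with h1 | h2
        · exact Or.inl (Finset.nonempty_iff_ne_empty.2 h1)
        · exact Or.inr (Finset.nonempty_iff_ne_empty.2 h2)
      by_cases hmin : ∀ CP' CQ' : Finset (Fin n), CP' ⊆ CP → CQ' ⊆ CQ →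
          (CP' ≠ CP ∨ CQ' ≠ CQ) → (CP'.Nonempty ∨ CQ'.Nonempty) →
          ¬ (G.Forced μ CP' CQ' ∧ G.Forced μ' CP' CQ')
      · have hpay : G.ForcedPay μ CP CQ = G.ForcedPay μ' CP CQ := by
          rw [forcedPay_eq G h hF, forcedPay_eq G h' hF']
          congr 1
          · exact Finset.sum_congr rfl hzp
          · exact Finset.sum_congr rfl hzq
        exact hnd μ μ' CP CQ h.1.1 h'.1.1 hF hF' hnonempty hmin hpay
      · push_neg at hmin
        obtain ⟨CP', CQ', hsubP, hsubQ, hproper, hne', hforced⟩ := hmin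
        have hcard' : CP'.card + CQ'.card ≤ N := by
          have e1 : CP'.card ≤ CP.card := Finset.card_le_card hsubP
          have e2 : CQ'.card ≤ CQ.card := Finset.card_le_card hsubQ
          rcases hproper with hp | hq
          · have : CP'.card < CP.card :=
              Finset.card_lt_card (Finset.ssubset_iff_subset_ne.2 ⟨hsubP, hp⟩)
            omega
          · have : CQ'.card < CQ.card :=
              Finset.card_lt_card (Finset.ssubset_iff_subset_ne.2 ⟨hsubQ, hq⟩)
            omega
        have hdiffF : G.Forced μ (CP \ CP') (CQ \ CQ') :=
          Forced.sdiff_of hF hforced.1 hsubP hsubQ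
        have hdiffF' : G.Forced μ' (CP \ CP') (CQ \ CQ') :=
          Forced.sdiff_of hF' hforced.2 hsubP hsubQ
        have hcard'' : (CP \ CP').card + (CQ \ CQ').card ≤ N := by
          have e1 : (CP \ CP').card = CP.card - CP'.card := Finset.card_sdiff_of_subset hsubP
          have e2 : (CQ \ CQ').card = CQ.card - CQ'.card := Finset.card_sdiff_of_subset hsubQ
          rcases hne' with ⟨x, hx⟩ | ⟨x, hx⟩
          · have : 1 ≤ CP'.card := Finset.card_pos.2 ⟨x, hx⟩
            have := Finset.card_le_card hsubP
            have := Finset.card_le_card hsubQ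
            omega
          · have : 1 ≤ CQ'.card := Finset.card_pos.2 ⟨x, hx⟩
            have := Finset.card_le_card hsubP
            have := Finset.card_le_card hsubQ
            omega
        obtain ⟨c1, c2⟩ := ih CP' CQ' hcard' hforced.1 hforced.2
          (fun i hi => hzp i (hsubP hi)) (fun j hj => hzq j (hsubQ hj))
        obtain ⟨d1, d2⟩ := ih (CP \ CP') (CQ \ CQ') hcard'' hdiffF hdiffF'
          (fun i hi => hzp i (Finset.mem_sdiff.1 hi).1) (fun j hj => hzq j (Finset.mem_sdiff.1 hj).1)
        constructor
        · intro i hi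
          by_cases hi' : i ∈ CP'
          · exact c1 i hi'
          · exact d1 i (Finset.mem_sdiff.2 ⟨hi, hi'⟩)
        · intro i j hj
          by_cases hj' : j ∈ CQ'
          · exact c2 i j hj'
          · exact d2 i j (Finset.mem_sdiff.2 ⟨hj, hj'⟩)

end RiFle
namespace RiFle

open Finset

/-- Abstract context for the alternating-path argument. -/
structure Ctx (V : Type) [Fintype V] [DecidableEq V] where
  step : V → Option V
  inj : ∀ x y z, step x = some z → step y = some z → x = y
  sp : V → Prop
  sn : V → Prop
  agree : V → Prop
  rig : V → V → Prop
  h0 : ∀ x, ¬ (sp x ∧ sn x)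
  h1 : ∀ x, sp x → step x ≠ none
  h2 : ∀ x, sn x → ∃ y, step y = some x
  h3 : ∀ x y, sp x → step x = some y → ¬ sn y ∧ (¬ rig x y → sp y)
  h4 : ∀ x y, sn y → step x = some y → ¬ sp x ∧ (¬ rig x y → sn x)
  zoneLem : ∀ S : Finset V, (∀ x ∈ S, ¬ sp x ∧ ¬ sn x) →
     (∀ x ∈ S, ∀ y, step x = some y → y ∈ S ∨ rig x y) →
     (∀ x ∈ S, ∀ y, step y = some x → y ∈ S ∨ rig y x) →
     ∀ x ∈ S, agree x
  h6a : ∀ x y, agree x → step x = some y → ¬ sp x → ¬ sn x → ¬ sp y ∧ ¬ sn y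
  h6b : ∀ x y, agree x → step y = some x → ¬ sp x → ¬ sn x → ¬ sp y ∧ ¬ sn y
  h7a : ∀ x, agree x → step x = none → ∀ y, step y ≠ some x
  h7b : ∀ x, agree x → (∀ y, step y ≠ some x) → step x = none

namespace Ctx

variable {V : Type} [Fintype V] [DecidableEq V] (c : Ctx V)

def seq (x : V) : ℕ → Option V
  | 0 => some x
  | (k+1) => (seq x k).bind c.step

lemma seq_zero (x : V) : c.seq x 0 = some x := rfl

lemma seq_succ (x : V) (k : ℕ) : c.seq x (k+1) = (c.seq x k).bind c.step := rfl

lemma seq_add (x : V) (a : ℕ) (z : V) (hz : c.seq x a = some z) :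
    ∀ b, c.seq x (a+b) = c.seq z b := by
  intro b
  induction b with
  | zero => simpa [seq_zero] using hz
  | succ b ihb => rw [← Nat.add_assoc, seq_succ, ihb, seq_succ]

lemma seq_decompose (x : V) (k : ℕ) (y : V) (h : c.seq x (k+1) = some y) :
    ∃ w, c.seq x k = some w ∧ c.step w = some y := by
  rw [seq_succ] at h
  cases hw : c.seq x k with
  | none => rw [hw] at h; simp at h
  | some w => rw [hw] at h; exact ⟨w, rfl, h⟩

lemma mcl : ∀ m x y, c.sp x → c.sn y → c.seq x m = some y → False := by
  intro m
  induction m using Nat.strong_induction_on with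
  | _ m ih =>
  intro x y hsp hsn hseq
  rcases m with _ | m'
  · rw [seq_zero] at hseq
    exact c.h0 y ⟨(Option.some_inj.1 hseq) ▸ hsp, hsn⟩
  · by_cases hint : ∃ k z, 0 < k ∧ k < m'+1 ∧ c.seq x k = some z ∧ (c.sp z ∨ c.sn z)
    · obtain ⟨k, z, hk0, hkm, hz, hsz⟩ := hint
      rcases hsz with hzp | hzn
      · have hrest : c.seq z ((m'+1)-k) = some y := by
          have h1 := c.seq_add x k z hz ((m'+1)-k)
          rw [Nat.add_sub_cancel' (le_of_lt hkm)] at h1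
          rw [← h1]; exact hseq
        exact ih ((m'+1)-k) (by omega) z y hzp hsn hrest
      · exact ih k (by omega) x z hsp hzn hz
    · push_neg at hint
      rcases m' with _ | m''
      · obtain ⟨w, hw, hstep⟩ := c.seq_decompose x 0 y hseq
        rw [seq_zero] at hw
        exact (c.h3 x y hsp ((Option.some_inj.1 hw) ▸ hstep)).1 hsn
      · classical
        set Z : Finset V := univ.filter
          (fun z => ∃ k, 0 < k ∧ k < m''+2 ∧ c.seq x k = some z) with hZ
        have hZmem : ∀ z, z ∈ Z ↔ ∃ k, 0 < k ∧ k < m''+2 ∧ c.seq x k = some z := by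
          intro z; simp [hZ]
        have hZzero : ∀ z ∈ Z, ¬ c.sp z ∧ ¬ c.sn z := by
          intro z hzm
          obtain ⟨k, hk0, hkm, hk⟩ := (hZmem z).1 hzm
          exact ⟨(hint k z hk0 hkm hk).1, (hint k z hk0 hkm hk).2⟩
        have hfwd : ∀ z ∈ Z, ∀ y', c.step z = some y' → y' ∈ Z ∨ c.rig z y' := by
          intro z hzm y' hstep
          obtain ⟨k, hk0, hkm, hk⟩ := (hZmem z).1 hzm
          have hnext : c.seq x (k+1) = some y' := by
            rw [seq_succ, hk]; simpa using hstep
          by_cases hkk : k+1 < m''+2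
          · exact Or.inl ((hZmem y').2 ⟨k+1, by omega, hkk, hnext⟩)
          · have hkeq : k+1 = m''+2 := by omega
            have hyy : y' = y := by
              rw [hkeq] at hnext; rw [hnext] at hseq; exact Option.some_inj.1 hseq
            subst hyy
            right
            by_contra hrig
            exact ((hZzero z hzm).2) ((c.h4 z y' hsn hstep).2 hrig)
        have hbwd : ∀ z ∈ Z, ∀ y', c.step y' = some z → y' ∈ Z ∨ c.rig y' z := by
          intro z hzm y' hstep
          obtain ⟨k, hk0, hkm, hk⟩ := (hZmem z).1 hzm
          obtain ⟨k', rfl⟩ : ∃ k', k = k'+1 := ⟨k-1, by omega⟩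
          obtain ⟨w, hw, hwstep⟩ := c.seq_decompose x k' z hk
          have hyw : y' = w := c.inj y' w z hstep hwstep
          subst hyw
          rcases Nat.eq_zero_or_pos k' with hk'0 | hk'pos
          · subst hk'0
            rw [seq_zero] at hw
            have hxw : y' = x := (Option.some_inj.1 hw).symm
            subst hxw
            right
            by_contra hrig
            exact ((hZzero z hzm).1) ((c.h3 y' z hsp hwstep).2 hrig)
          · exact Or.inl ((hZmem y').2 ⟨k', hk'pos, by omega, hw⟩)
        have hagree := c.zoneLem Z hZzero hfwd hbwd
        obtain ⟨w, hw, hwstep⟩ := c.seq_decompose x (m''+1) y hseq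
        have hwZ : w ∈ Z := (hZmem w).2 ⟨m''+1, by omega, by omega, hw⟩
        have hzw := hZzero w hwZ
        exact (c.h6a w y (hagree w hwZ) hwstep hzw.1 hzw.2).2 hsn

lemma tz : ∀ m x e, c.sp x → c.seq x m = some e → c.step e = none → False := by
  intro m
  induction m using Nat.strong_induction_on with
  | _ m ih =>
  intro x e hsp hseq hend
  rcases Nat.eq_zero_or_pos m with hm | hm
  · subst hm
    rw [seq_zero] at hseq
    exact c.h1 x hsp ((Option.some_inj.1 hseq) ▸ hend)
  · by_cases hint : ∃ k z, 0 < k ∧ k ≤ m ∧ c.seq x k = some z ∧ c.sp z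
    · obtain ⟨k, z, hk0, hkm, hz, hzp⟩ := hint
      rcases Nat.lt_or_ge k m with hlt | hge
      · have hrest : c.seq z (m-k) = some e := by
          have h1 := c.seq_add x k z hz (m-k)
          rw [Nat.add_sub_cancel' (le_of_lt hlt)] at h1
          rw [← h1]; exact hseq
        exact ih (m-k) (by omega) z e hzp hrest hend
      · have hkeq : k = m := by omega
        rw [hkeq, hseq] at hz
        exact c.h1 e ((Option.some_inj.1 hz) ▸ hzp) hend
    · push_neg at hint
      classical
      set Z : Finset V := univ.filter
        (fun z => ∃ k, 0 < k ∧ k ≤ m ∧ c.seq x k = some z) with hZ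
      have hZmem : ∀ z, z ∈ Z ↔ ∃ k, 0 < k ∧ k ≤ m ∧ c.seq x k = some z := by
        intro z; simp [hZ]
      have hZzero : ∀ z ∈ Z, ¬ c.sp z ∧ ¬ c.sn z := by
        intro z hzm
        obtain ⟨k, hk0, hkm, hk⟩ := (hZmem z).1 hzm
        exact ⟨hint k z hk0 hkm hk, fun hc => c.mcl k x z hsp hc hk⟩
      have hfwd : ∀ z ∈ Z, ∀ y', c.step z = some y' → y' ∈ Z ∨ c.rig z y' := by
        intro z hzm y' hstep
        obtain ⟨k, hk0, hkm, hk⟩ := (hZmem z).1 hzm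
        rcases Nat.lt_or_ge k m with hlt | hge
        · have hnext : c.seq x (k+1) = some y' := by
            rw [seq_succ, hk]; simpa using hstep
          exact Or.inl ((hZmem y').2 ⟨k+1, by omega, by omega, hnext⟩)
        · have hkeq : k = m := by omega
          rw [hkeq, hseq] at hk
          have hez : e = z := Option.some_inj.1 hk
          rw [← hez, hend] at hstep
          simp at hstep
      have hbwd : ∀ z ∈ Z, ∀ y', c.step y' = some z → y' ∈ Z ∨ c.rig y' z := by
        intro z hzm y' hstep
        obtain ⟨k, hk0, hkm, hk⟩ := (hZmem z).1 hzm
        obtain ⟨k', rfl⟩ : ∃ k', k = k'+1 := ⟨k-1, by omega⟩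
        obtain ⟨w, hw, hwstep⟩ := c.seq_decompose x k' z hk
        have hyw : y' = w := c.inj y' w z hstep hwstep
        subst hyw
        rcases Nat.eq_zero_or_pos k' with hk'0 | hk'pos
        · subst hk'0
          rw [seq_zero] at hw
          have hxw : y' = x := (Option.some_inj.1 hw).symm
          subst hxw
          right
          by_contra hrig
          exact ((hZzero z hzm).1) ((c.h3 y' z hsp hwstep).2 hrig)
        · exact Or.inl ((hZmem y').2 ⟨k', hk'pos, by omega, hw⟩)
      have hagree := c.zoneLem Z hZzero hfwd hbwd
      have heZ : e ∈ Z := (hZmem e).2 ⟨m, hm, le_refl m, hseq⟩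
      obtain ⟨m', rfl⟩ : ∃ m', m = m'+1 := ⟨m-1, by omega⟩
      obtain ⟨w, hw, hwstep⟩ := c.seq_decompose x m' e hseq
      exact c.h7a e (hagree e heZ) hend w hwstep

open Classical in
noncomputable def bwdStep (x : V) : Option V :=
  if h : ∃ y, c.step y = some x then some h.choose else none

lemma bwdStep_eq {x y : V} : c.bwdStep x = some y ↔ c.step y = some x := by
  constructor
  · intro h
    unfold bwdStep at h
    split at h
    · next hex =>
      have := hex.choose_spec
      rw [Option.some_inj.1 h] at this
      exact this
    · simp at h
  · intro h
    have hex : ∃ y, c.step y = some x := ⟨y, h⟩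
    unfold bwdStep
    rw [dif_pos hex]
    exact Option.some_inj.2 (c.inj hex.choose y x hex.choose_spec h)

lemma bwdStep_none {x : V} : c.bwdStep x = none ↔ ∀ y, c.step y ≠ some x := by
  constructor
  · intro h y hy
    rw [(c.bwdStep_eq).2 hy] at h
    simp at h
  · intro h
    unfold bwdStep
    rw [dif_neg]
    rintro ⟨y, hy⟩
    exact h y hy

noncomputable def swap : Ctx V where
  step := c.bwdStep
  inj := by
    intro x y z hx hy
    have hx' := c.bwdStep_eq.1 hx
    have hy' := c.bwdStep_eq.1 hy
    rw [hx'] at hy'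
    exact Option.some_inj.1 hy'
  sp := c.sn
  sn := c.sp
  agree := c.agree
  rig := fun x y => c.rig y x
  h0 := fun x h => c.h0 x ⟨h.2, h.1⟩
  h1 := by
    intro x hx hc
    obtain ⟨y, hy⟩ := c.h2 x hx
    rw [c.bwdStep_eq.2 hy] at hc
    simp at hc
  h2 := by
    intro x hx
    cases hs : c.step x with
    | none => exact absurd hs (c.h1 x hx)
    | some z => exact ⟨z, c.bwdStep_eq.2 hs⟩
  h3 := by
    intro x y hx hxy
    exact c.h4 y x hx (c.bwdStep_eq.1 hxy)
  h4 := by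
    intro x y hy hxy
    exact c.h3 y x hy (c.bwdStep_eq.1 hxy)
  zoneLem := by
    intro S hz hfwd hbwd
    refine c.zoneLem S (fun x hx => ⟨(hz x hx).2, (hz x hx).1⟩) ?_ ?_
    · intro x hx y hxy
      rcases hbwd x hx y (c.bwdStep_eq.2 hxy) with h | h
      · exact Or.inl h
      · exact Or.inr h
    · intro x hx y hxy
      rcases hfwd x hx y (c.bwdStep_eq.2 hxy) with h | h
      · exact Or.inl h
      · exact Or.inr h
  h6a := by
    intro x y hag hxy hsp hsn
    have := c.h6b x y hag (c.bwdStep_eq.1 hxy) hsn hsp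
    exact ⟨this.2, this.1⟩
  h6b := by
    intro x y hag hxy hsp hsn
    have := c.h6a x y hag (c.bwdStep_eq.1 hxy) hsn hsp
    exact ⟨this.2, this.1⟩
  h7a := by
    intro x hag hnone y hy
    have hnostep : ∀ w, c.step w ≠ some x := c.bwdStep_none.1 hnone
    have hxnone : c.step x = none := c.h7b x hag hnostep
    have hxy : c.step x = some y := c.bwdStep_eq.1 hy
    rw [hxnone] at hxy
    simp at hxy
  h7b := by
    intro x hag hno
    have hstepnone : c.step x = none := by
      cases hs : c.step x with
      | none => rfl
      | some z => exact absurd (c.bwdStep_eq.2 hs) (hno z)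
    exact c.bwdStep_none.2 (c.h7a x hag hstepnone)

end Ctx

end RiFle
namespace RiFle

namespace Ctx

open Finset

variable {V : Type} [Fintype V] [DecidableEq V] (c : Ctx V)

lemma seq_periodic {y : V} {p : ℕ} (hp : c.seq y p = some y) :
    ∀ t, c.seq y (p + t) = c.seq y t := by
  intro t
  exact c.seq_add y p y hp t

lemma mcl2 : ∀ m x y, c.sp x → c.sn y → c.seq y m = some x → False := by
  intro m x y hsp hsn hseq
  classical
  set d := c.swap with hd
  have hdsp : d.sp y := hsn
  have htot : ∀ t, ∃ z, d.seq y t = some z := by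
    intro t
    induction t with
    | zero => exact ⟨y, rfl⟩
    | succ t iht =>
      obtain ⟨z, hz⟩ := iht
      cases hzz : d.step z with
      | none => exact (d.tz t y z hdsp hz hzz).elim
      | some w =>
        refine ⟨w, ?_⟩
        rw [d.seq_succ, hz]
        simpa using hzz
  -- pigeonhole to find a repeat
  have hcard : Fintype.card V < Fintype.card (Fin (Fintype.card V + 1)) := by simp
  set g : Fin (Fintype.card V + 1) → V := fun t => (htot t.val).choose with hg
  obtain ⟨t₁, t₂, hne, heq⟩ := Fintype.exists_ne_map_eq_of_card_lt g hcard
  have hg1 : d.seq y t₁.val = some (g t₁) := (htot t₁.val).choose_spec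
  have hg2 : d.seq y t₂.val = some (g t₂) := (htot t₂.val).choose_spec
  -- wlog t₁ < t₂
  have hmain : ∀ (a b : ℕ), a < b → d.seq y a = d.seq y b → False → True := fun _ _ _ _ _ => trivial
  have key : ∀ (a b : ℕ), a < b → d.seq y a = d.seq y b →
      ∃ p, 0 < p ∧ d.seq y p = some y := by
    intro a b hab habeq
    -- downward induction to get period
    have hdown : ∀ t, t ≤ a → d.seq y (a - t) = d.seq y (b - t) := by
      intro t
      induction t with
      | zero => simpa using habeq
      | succ t iht =>
        intro hta
        have hprev := iht (by omega)
        have ha1 : a - t = (a - (t+1)) + 1 := by omega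
        have hb1 : b - t = (b - (t+1)) + 1 := by omega
        obtain ⟨za, hza⟩ := htot (a - t)
        have hzb : d.seq y (b - t) = some za := by rw [← hprev]; exact hza
        rw [ha1] at hza
        rw [hb1] at hzb
        obtain ⟨wa, hwa, hwastep⟩ := d.seq_decompose y _ za hza
        obtain ⟨wb, hwb, hwbstep⟩ := d.seq_decompose y _ za hzb
        have : wa = wb := d.inj wa wb za hwastep hwbstep
        rw [hwa, hwb, this]
    have h0 := hdown a (le_refl a)
    simp only [Nat.sub_self] at h0
    rw [d.seq_zero] at h0
    exact ⟨b - a, by omega, h0.symm⟩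
  have hper : ∃ p, 0 < p ∧ d.seq y p = some y := by
    rcases Nat.lt_or_ge t₁.val t₂.val with hlt | hge
    · exact key t₁.val t₂.val hlt (by rw [hg1, hg2, heq])
    · have hlt : t₂.val < t₁.val := by
        rcases Nat.lt_or_ge t₂.val t₁.val with h | h
        · exact h
        · exact absurd (Fin.ext (by omega)) hne
      exact key t₂.val t₁.val hlt (by rw [hg1, hg2, heq])
  obtain ⟨p, hp0, hp⟩ := hper
  -- translate the original chain y →^m x into the swap orbit
  have htrans : ∀ m' z, c.seq y m' = some z → ∃ t, d.seq y t = some z := by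
    intro m'
    induction m' with
    | zero =>
      intro z hz
      rw [c.seq_zero] at hz
      exact ⟨0, by rw [d.seq_zero, hz]⟩
    | succ m' ihm =>
      intro z hz
      obtain ⟨w, hw, hwstep⟩ := c.seq_decompose y m' z hz
      obtain ⟨t, ht⟩ := ihm w hw
      -- z is the swap-predecessor of w; find it at index t + p - 1
      have hper' : d.seq y (t + p) = some w := by
        have h1 : d.seq y (p + t) = d.seq y t := d.seq_periodic hp t
        rw [Nat.add_comm t p, h1]; exact ht
      obtain ⟨t', ht'⟩ : ∃ t', t + p = t' + 1 := ⟨t + p - 1, by omega⟩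
      rw [ht'] at hper'
      obtain ⟨z', hz', hz'step⟩ := d.seq_decompose y t' w hper'
      -- d.step z' = some w means c.step w = some z'
      have : c.step w = some z' := c.bwdStep_eq.1 hz'step
      have hzz' : z = z' := by
        rw [hwstep] at this
        exact Option.some_inj.1 this
      exact ⟨t', by rw [hzz']; exact hz'⟩
  obtain ⟨t, ht⟩ := htrans m x hseq
  exact d.mcl t y x hdsp hsp ht

def F (x y : V) : Prop := Relation.ReflTransGen (fun a b => c.step a = some b) x y

lemma F_to_seq {x y : V} (h : c.F x y) : ∃ m, c.seq x m = some y := by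
  induction h with
  | refl => exact ⟨0, c.seq_zero x⟩
  | tail _ hstep ih =>
    obtain ⟨m, hm⟩ := ih
    refine ⟨m+1, ?_⟩
    rw [c.seq_succ, hm]
    simpa using hstep

theorem main {x y : V} (hx : c.sp x) (hr : c.F x y ∨ c.F y x) : ¬ c.sn y := by
  intro hsn
  rcases hr with h | h
  · obtain ⟨m, hm⟩ := c.F_to_seq h
    exact c.mcl m x y hx hsn hm
  · obtain ⟨m, hm⟩ := c.F_to_seq h
    exact c.mcl2 m x y hx hsn hm

/-- Linearity: symmetric reachability implies directed reachability one way or the other. -/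
theorem linear {x y : V}
    (h : Relation.ReflTransGen (fun a b => c.step a = some b ∨ c.step b = some a) x y) :
    c.F x y ∨ c.F y x := by
  induction h with
  | refl => exact Or.inl Relation.ReflTransGen.refl
  | @tail b e hxb hbe ih =>
    rcases ih with hxb' | hbx
    · rcases hbe with hstep | hstep
      · exact Or.inl (Relation.ReflTransGen.tail hxb' hstep)
      · rcases (Relation.ReflTransGen.cases_tail hxb') with heq | ⟨w, hxw, hwb⟩
        · exact Or.inr (Relation.ReflTransGen.single (by rw [← heq]; exact hstep))
        · have hwe : w = e := c.inj w e b hwb hstep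
          exact Or.inl (by rw [← hwe]; exact hxw)
    · rcases hbe with hstep | hstep
      · rcases (Relation.ReflTransGen.cases_head hbx) with heq | ⟨w, hbw, hwx⟩
        · exact Or.inl (Relation.ReflTransGen.single (by rw [heq] at hstep; exact hstep))
        · have hwe : w = e := by
            rw [hbw] at hstep
            exact Option.some_inj.1 hstep
          exact Or.inr (by rw [← hwe]; exact hwx)
      · exact Or.inr (Relation.ReflTransGen.head hstep hbx)

end Ctx

end RiFle
namespace RiFle

open Finset

variable {n : ℕ}

theorem assembly (G : RiFle n) {μ μ' : Fin n → Option (Fin n)} {u v u' v' : Fin n → ℝ}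
    (h : G.Stable μ u v) (h' : G.Stable μ' u' v') (A : Finset (Fin n))
    (hS : ∀ i ∈ A, ∀ i' j, μ i = some j → μ' i' = some j → i' ∈ A)
    (U W : Fin n → ℝ)
    (ha : ∀ i ∈ A, U i = u i ∧ ∀ j, μ i = some j → W j = v j)
    (hb : ∀ i, i ∉ A → U i = u' i ∧ ∀ j, μ' i = some j → W j = v' j)
    (hUnn : ∀ i, 0 ≤ U i) (hWnn : ∀ j, 0 ≤ W j)
    (hW0 : ∀ j, (∀ i ∈ A, μ i ≠ some j) → (∀ i, i ∉ A → μ' i ≠ some j) → W j = 0)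
    (hblock1 : ∀ i j, ¬ G.RigidPair i j → G.α i j ≤ U i + W j)
    (hblock2 : ∀ i j, G.RigidPair i j → G.β i j ≤ U i ∨ G.γ i j ≤ W j) :
    G.Stable (fun i => if i ∈ A then μ i else μ' i) U W := by
  classical
  have facts := stable_facts G h
  have facts' := stable_facts G h'
  set ν : Fin n → Option (Fin n) := fun i => if i ∈ A then μ i else μ' i with hν
  have hνA : ∀ i ∈ A, ν i = μ i := fun i hi => by simp [hν, hi]
  have hνA' : ∀ i, i ∉ A → ν i = μ' i := fun i hi => by simp [hν, hi]
  have hmν : Matching ν := by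
    intro i i' j hi hi'
    by_cases hiA : i ∈ A <;> by_cases hi'A : i' ∈ A
    · exact h.1.1 i i' j (by rw [← hνA i hiA]; exact hi) (by rw [← hνA i' hi'A]; exact hi')
    · rw [hνA i hiA] at hi; rw [hνA' i' hi'A] at hi'
      exact absurd (hS i hiA i' j hi hi') hi'A
    · rw [hνA' i hiA] at hi; rw [hνA i' hi'A] at hi'
      exact absurd (hS i' hi'A i j hi' hi) hiA
    · exact h'.1.1 i i' j (by rw [← hνA' i hiA]; exact hi) (by rw [← hνA' i' hi'A]; exact hi')
  have hsum : (∑ i, U i) + (∑ j, W j) = ∑ i, (ν i).elim 0 (fun j => G.α i j) := by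
    have hper : ∀ i, (ν i).elim 0 (fun j => G.α i j) = U i + (ν i).elim 0 (fun j => W j) := by
      intro i
      by_cases hiA : i ∈ A
      · have hUi := (ha i hiA).1
        rw [hνA i hiA]
        cases hμi : μ i with
        | none => simp [hUi, facts.2.1 i hμi]
        | some j =>
          have hWj := (ha i hiA).2 j hμi
          have hα := facts.1 i j hμi
          simp only [Option.elim]
          rw [hUi, hWj]; linarith
      · have hUi := (hb i hiA).1
        rw [hνA' i hiA]
        cases hμi : μ' i with
        | none => simp [hUi, facts'.2.1 i hμi]
        | some j =>
          have hWj := (hb i hiA).2 j hμi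
          have hα := facts'.1 i j hμi
          simp only [Option.elim]
          rw [hUi, hWj]; linarith
    rw [Finset.sum_congr rfl (fun i _ => hper i), Finset.sum_add_distrib]
    congr 1
    refine (sum_elim_eq ν hmν W ?_).symm
    intro j hj
    refine hW0 j ?_ ?_
    · intro i hiA hc
      exact hj i (by rw [hνA i hiA]; exact hc)
    · intro i hiA hc
      exact hj i (by rw [hνA' i hiA]; exact hc)
  refine ⟨⟨hmν, hUnn, hWnn, ?_, ?_, hsum⟩, hblock1, hblock2⟩
  · intro i j hij hP
    by_cases hiA : i ∈ A
    · rw [hνA i hiA] at hij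
      have hsplit := stable_rigid_split G h i j hij (Or.inl hP)
      exact ⟨by rw [(ha i hiA).1, hsplit.1], fun _ => by rw [(ha i hiA).2 j hij, hsplit.2]⟩
    · rw [hνA' i hiA] at hij
      have hsplit := stable_rigid_split G h' i j hij (Or.inl hP)
      exact ⟨by rw [(hb i hiA).1, hsplit.1], fun _ => by rw [(hb i hiA).2 j hij, hsplit.2]⟩
  · intro i j hij hQ
    by_cases hiA : i ∈ A
    · rw [hνA i hiA] at hij
      have hsplit := stable_rigid_split G h i j hij (Or.inr hQ)
      exact ⟨by rw [(ha i hiA).2 j hij, hsplit.2], fun _ => by rw [(ha i hiA).1, hsplit.1]⟩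
    · rw [hνA' i hiA] at hij
      have hsplit := stable_rigid_split G h' i j hij (Or.inr hQ)
      exact ⟨by rw [(hb i hiA).2 j hij, hsplit.2], fun _ => by rw [(hb i hiA).1, hsplit.1]⟩

end RiFle
namespace RiFle

open Finset

variable {n : ℕ}

section GameCtx

variable (G : RiFle n) (μ μ' : Fin n → Option (Fin n)) (u v u' v' : Fin n → ℝ)

open Classical in
noncomputable def stepFun : (Fin n ⊕ Fin n) → Option (Fin n ⊕ Fin n) :=
  Sum.elim (fun i => (μ i).map Sum.inr)
    (fun j => if hx : ∃ i, μ' i = some j then some (Sum.inl hx.choose) else none)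

lemma stepFun_inl_eq {i : Fin n} {x : Fin n ⊕ Fin n} :
    stepFun μ μ' (Sum.inl i) = some x ↔ ∃ j, μ i = some j ∧ x = Sum.inr j := by
  cases hμ : μ i <;> simp [stepFun, hμ, eq_comm]

lemma stepFun_inr_eq (hm' : Matching μ') {j : Fin n} {x : Fin n ⊕ Fin n} :
    stepFun μ μ' (Sum.inr j) = some x ↔ ∃ i, μ' i = some j ∧ x = Sum.inl i := by
  constructor
  · intro hx
    unfold stepFun at hx
    simp only [Sum.elim_inr] at hx
    split at hx
    · next hex => exact ⟨hex.choose, hex.choose_spec, (Option.some_inj.1 hx).symm⟩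
    · simp at hx
  · rintro ⟨i, hi, rfl⟩
    have hex : ∃ i, μ' i = some j := ⟨i, hi⟩
    unfold stepFun
    simp only [Sum.elim_inr]
    rw [dif_pos hex]
    exact Option.some_inj.2 (congrArg Sum.inl (hm' hex.choose i j hex.choose_spec hi))

lemma stepFun_inl_none {i : Fin n} :
    stepFun μ μ' (Sum.inl i) = none ↔ μ i = none := by
  cases hμ : μ i <;> simp [stepFun, hμ]

lemma stepFun_inr_none {j : Fin n} :
    stepFun μ μ' (Sum.inr j) = none ↔ ∀ i, μ' i ≠ some j := by
  unfold stepFun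
  simp only [Sum.elim_inr]
  split
  · next hex =>
    constructor
    · intro hc; simp at hc
    · intro hall; exact absurd hex.choose_spec (hall _)
  · next hex =>
    push_neg at hex
    constructor
    · intro _; exact hex
    · intro _; rfl

variable {G μ μ' u v u' v'}

section Edges

lemma edge_mu_rigid {i j : Fin n} (h : G.Stable μ u v) (h' : G.Stable μ' u' v') (hij : μ i = some j) (hr : G.RigidPair i j) :
    u i ≤ u' i ∨ v j ≤ v' j := by
  have hsplit := stable_rigid_split G h i j hij hr
  rcases h'.2.2 i j hr with hc | hc
  · exact Or.inl (by rw [hsplit.1]; exact hc)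
  · exact Or.inr (by rw [hsplit.2]; exact hc)

lemma edge_mu_flex {i j : Fin n} (h : G.Stable μ u v) (h' : G.Stable μ' u' v') (hij : μ i = some j) (hr : ¬ G.RigidPair i j) :
    u i + v j ≤ u' i + v' j := by
  have hα := (stable_facts G h).1 i j hij
  have := h'.2.1 i j hr
  linarith

lemma edge_mu'_rigid {i j : Fin n} (h : G.Stable μ u v) (h' : G.Stable μ' u' v') (hij : μ' i = some j) (hr : G.RigidPair i j) :
    u' i ≤ u i ∨ v' j ≤ v j := by
  have hsplit := stable_rigid_split G h' i j hij hr
  rcases h.2.2 i j hr with hc | hc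
  · exact Or.inl (by rw [hsplit.1]; exact hc)
  · exact Or.inr (by rw [hsplit.2]; exact hc)

lemma edge_mu'_flex {i j : Fin n} (h : G.Stable μ u v) (h' : G.Stable μ' u' v') (hij : μ' i = some j) (hr : ¬ G.RigidPair i j) :
    u' i + v' j ≤ u i + v j := by
  have hα := (stable_facts G h').1 i j hij
  have := h.2.1 i j hr
  linarith

end Edges

noncomputable def gameCtx (hnd : G.NonDegenerate)
    (h : G.Stable μ u v) (h' : G.Stable μ' u' v') : Ctx (Fin n ⊕ Fin n) where
  step := stepFun μ μ'
  inj := by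
    intro x y z hx hy
    cases z with
    | inl i =>
      cases x with
      | inl i₀ =>
        obtain ⟨j, _, hcon⟩ := (stepFun_inl_eq μ μ').1 hx
        exact absurd hcon (by simp)
      | inr j₀ =>
        cases y with
        | inl i₁ =>
          obtain ⟨j, _, hcon⟩ := (stepFun_inl_eq μ μ').1 hy
          exact absurd hcon (by simp)
        | inr j₁ =>
          obtain ⟨i₀', hμ₀, hx'⟩ := (stepFun_inr_eq μ μ' h'.1.1).1 hx
          obtain ⟨i₁', hμ₁, hy'⟩ := (stepFun_inr_eq μ μ' h'.1.1).1 hy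
          have hi₀ : i₀' = i := by injection hx' with he; exact he.symm ▸ rfl
          have hi₁ : i₁' = i := by injection hy' with he; exact he.symm ▸ rfl
          rw [hi₀] at hμ₀; rw [hi₁] at hμ₁
          rw [hμ₀] at hμ₁
          exact congrArg Sum.inr (Option.some_inj.1 hμ₁).symm ▸ rfl
    | inr j =>
      cases x with
      | inr j₀ =>
        obtain ⟨i, _, hcon⟩ := (stepFun_inr_eq μ μ' h'.1.1).1 hx
        exact absurd hcon (by simp)
      | inl i₀ =>
        cases y with
        | inr j₁ =>
          obtain ⟨i, _, hcon⟩ := (stepFun_inr_eq μ μ' h'.1.1).1 hy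
          exact absurd hcon (by simp)
        | inl i₁ =>
          obtain ⟨j₀', hμ₀, hx'⟩ := (stepFun_inl_eq μ μ').1 hx
          obtain ⟨j₁', hμ₁, hy'⟩ := (stepFun_inl_eq μ μ').1 hy
          have hj₀ : j₀' = j := by injection hx' with he; exact he.symm ▸ rfl
          have hj₁ : j₁' = j := by injection hy' with he; exact he.symm ▸ rfl
          rw [hj₀] at hμ₀; rw [hj₁] at hμ₁
          exact congrArg Sum.inl (h.1.1 i₀ i₁ j hμ₀ hμ₁)
  sp := Sum.elim (fun i => u' i < u i) (fun j => v j < v' j)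
  sn := Sum.elim (fun i => u i < u' i) (fun j => v' j < v j)
  agree := Sum.elim (fun i => μ i = μ' i) (fun j => ∀ i, μ i = some j ↔ μ' i = some j)
  rig := fun x y =>
    Sum.elim (fun i => Sum.elim (fun _ => False) (fun j => G.RigidPair i j) y)
      (fun j => Sum.elim (fun i => G.RigidPair i j) (fun _ => False) y) x
  h0 := by rintro (i | j) ⟨h1, h2⟩ <;> simp at h1 h2 <;> linarith
  h1 := by
    rintro (i | j) hx hc
    · simp only [Sum.elim_inl] at hx
      have hμ : μ i = none := (stepFun_inl_none μ μ').1 hc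
      have := (stable_facts G h).2.1 i hμ
      have := h'.1.2.1 i
      linarith
    · simp only [Sum.elim_inr] at hx
      have hμ : ∀ i, μ' i ≠ some j := (stepFun_inr_none μ μ').1 hc
      have := (stable_facts G h').2.2 j hμ
      have := h.1.2.2.1 j
      linarith
  h2 := by
    rintro (i | j) hx
    · simp only [Sum.elim_inl] at hx
      cases hμ : μ' i with
      | none =>
        have := (stable_facts G h').2.1 i hμ
        have := h.1.2.1 i
        linarith
      | some j =>
        exact ⟨Sum.inr j, (stepFun_inr_eq μ μ' h'.1.1).2 ⟨i, hμ, rfl⟩⟩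
    · simp only [Sum.elim_inr] at hx
      by_cases hμ : ∃ i, μ i = some j
      · obtain ⟨i, hi⟩ := hμ
        exact ⟨Sum.inl i, (stepFun_inl_eq μ μ').2 ⟨j, hi, rfl⟩⟩
      · push_neg at hμ
        have := (stable_facts G h).2.2 j hμ
        have := h'.1.2.2.1 j
        linarith
  h3 := by
    rintro (i | j) y hx hstep
    · obtain ⟨j, hμ, rfl⟩ := (stepFun_inl_eq μ μ').1 hstep
      simp only [Sum.elim_inl, Sum.elim_inr] at hx ⊢
      by_cases hr : G.RigidPair i j
      · rcases edge_mu_rigid h h' hμ hr with hc | hc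
        · linarith
        · exact ⟨by intro hcon; linarith, fun hnr => absurd hr (by simpa using hnr)⟩
      · have := edge_mu_flex h h' hμ hr
        exact ⟨by intro hcon; linarith, fun _ => by linarith⟩
    · obtain ⟨i, hμ, rfl⟩ := (stepFun_inr_eq μ μ' h'.1.1).1 hstep
      simp only [Sum.elim_inl, Sum.elim_inr] at hx ⊢
      by_cases hr : G.RigidPair i j
      · rcases edge_mu'_rigid h h' hμ hr with hc | hc
        · exact ⟨by intro hcon; linarith, fun hnr => absurd hr (by simpa using hnr)⟩
        · linarith
      · have := edge_mu'_flex h h' hμ hr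
        exact ⟨by intro hcon; linarith, fun _ => by linarith⟩
  h4 := by
    rintro x y hy hstep
    cases x with
    | inl i =>
      obtain ⟨j, hμ, rfl⟩ := (stepFun_inl_eq μ μ').1 hstep
      simp only [Sum.elim_inl, Sum.elim_inr] at hy ⊢
      by_cases hr : G.RigidPair i j
      · rcases edge_mu_rigid h h' hμ hr with hc | hc
        · exact ⟨by intro hcon; linarith, fun hnr => absurd hr (by simpa using hnr)⟩
        · linarith
      · have := edge_mu_flex h h' hμ hr
        exact ⟨by intro hcon; linarith, fun _ => by linarith⟩
    | inr j =>
      obtain ⟨i, hμ, rfl⟩ := (stepFun_inr_eq μ μ' h'.1.1).1 hstep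
      simp only [Sum.elim_inl, Sum.elim_inr] at hy ⊢
      by_cases hr : G.RigidPair i j
      · rcases edge_mu'_rigid h h' hμ hr with hc | hc
        · linarith
        · exact ⟨by intro hcon; linarith, fun hnr => absurd hr (by simpa using hnr)⟩
      · have := edge_mu'_flex h h' hμ hr
        exact ⟨by intro hcon; linarith, fun _ => by linarith⟩
  zoneLem := by
    classical
    intro S hz hfwd hbwd
    set CP : Finset (Fin n) := univ.filter (fun i => Sum.inl i ∈ S) with hCP
    set CQ : Finset (Fin n) := univ.filter (fun j => Sum.inr j ∈ S) with hCQ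
    have hCPm : ∀ i, i ∈ CP ↔ Sum.inl i ∈ S := by intro i; simp [hCP]
    have hCQm : ∀ j, j ∈ CQ ↔ Sum.inr j ∈ S := by intro j; simp [hCQ]
    have hFμ : G.Forced μ CP CQ := by
      intro i j hij hcross
      rcases hcross with ⟨hi, hj⟩ | ⟨hi, hj⟩
      · rcases hfwd (Sum.inl i) ((hCPm i).1 hi) (Sum.inr j)
          ((stepFun_inl_eq μ μ').2 ⟨j, hij, rfl⟩) with hc | hc
        · exact absurd ((hCQm j).2 hc) hj
        · simpa using hc
      · rcases hbwd (Sum.inr j) ((hCQm j).1 hj) (Sum.inl i)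
          ((stepFun_inl_eq μ μ').2 ⟨j, hij, rfl⟩) with hc | hc
        · exact absurd ((hCPm i).2 hc) hi
        · simpa using hc
    have hFμ' : G.Forced μ' CP CQ := by
      intro i j hij hcross
      rcases hcross with ⟨hi, hj⟩ | ⟨hi, hj⟩
      · rcases hbwd (Sum.inl i) ((hCPm i).1 hi) (Sum.inr j)
          ((stepFun_inr_eq μ μ' h'.1.1).2 ⟨i, hij, rfl⟩) with hc | hc
        · exact absurd ((hCQm j).2 hc) hj
        · simpa using hc
      · rcases hfwd (Sum.inr j) ((hCQm j).1 hj) (Sum.inl i)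
          ((stepFun_inr_eq μ μ' h'.1.1).2 ⟨i, hij, rfl⟩) with hc | hc
        · exact absurd ((hCPm i).2 hc) hi
        · simpa using hc
    have hzp : ∀ i ∈ CP, u i = u' i := by
      intro i hi
      have := hz (Sum.inl i) ((hCPm i).1 hi)
      simp only [Sum.elim_inl] at this
      have h1 := this.1; have h2 := this.2
      linarith [not_lt.1 h1, not_lt.1 h2]
    have hzq : ∀ j ∈ CQ, v j = v' j := by
      intro j hj
      have := hz (Sum.inr j) ((hCQm j).1 hj)
      simp only [Sum.elim_inr] at this
      have h1 := this.1; have h2 := this.2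
      linarith [not_lt.1 h1, not_lt.1 h2]
    obtain ⟨c1, c2⟩ := lemD G hnd h h' (CP.card + CQ.card) CP CQ (le_refl _) hFμ hFμ' hzp hzq
    rintro (i | j) hx
    · simpa using c1 i ((hCPm i).2 hx)
    · simp only [Sum.elim_inr]
      intro i
      exact c2 i j ((hCQm j).2 hx)
  h6a := by
    rintro x y hag hstep hnsp hnsn
    cases x with
    | inl i =>
      obtain ⟨j, hμ, rfl⟩ := (stepFun_inl_eq μ μ').1 hstep
      simp only [Sum.elim_inl] at hag hnsp hnsn
      simp only [Sum.elim_inr]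
      have hμ' : μ' i = some j := by rw [← hag]; exact hμ
      have hα := (stable_facts G h).1 i j hμ
      have hα' := (stable_facts G h').1 i j hμ'
      have huu : u i = u' i := le_antisymm (not_lt.1 hnsp) (not_lt.1 hnsn)
      constructor <;> intro hc <;> linarith
    | inr j =>
      obtain ⟨i, hμ', rfl⟩ := (stepFun_inr_eq μ μ' h'.1.1).1 hstep
      simp only [Sum.elim_inr] at hag hnsp hnsn
      simp only [Sum.elim_inl]
      have hμ : μ i = some j := (hag i).2 hμ'
      have hα := (stable_facts G h).1 i j hμ
      have hα' := (stable_facts G h').1 i j hμ'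
      have hvv : v j = v' j := le_antisymm (not_lt.1 hnsn) (not_lt.1 hnsp)
      constructor <;> intro hc <;> linarith
  h6b := by
    rintro x y hag hstep hnsp hnsn
    cases x with
    | inl i =>
      cases y with
      | inl i₀ =>
        obtain ⟨j, _, hcon⟩ := (stepFun_inl_eq μ μ').1 hstep
        exact absurd hcon (by simp)
      | inr j =>
        obtain ⟨i₀, hμ', he⟩ := (stepFun_inr_eq μ μ' h'.1.1).1 hstep
        have hii : i₀ = i := by injection he with he'; exact he'.symm ▸ rfl
        rw [hii] at hμ'
        simp only [Sum.elim_inl] at hag hnsp hnsn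
        simp only [Sum.elim_inr]
        have hμ : μ i = some j := by rw [hag]; exact hμ'
        have hα := (stable_facts G h).1 i j hμ
        have hα' := (stable_facts G h').1 i j hμ'
        have huu : u i = u' i := le_antisymm (not_lt.1 hnsp) (not_lt.1 hnsn)
        constructor <;> intro hc <;> linarith
    | inr j =>
      cases y with
      | inr j₀ =>
        obtain ⟨i, _, hcon⟩ := (stepFun_inr_eq μ μ' h'.1.1).1 hstep
        exact absurd hcon (by simp)
      | inl i =>
        obtain ⟨j₀, hμ, he⟩ := (stepFun_inl_eq μ μ').1 hstep
        have hjj : j₀ = j := by injection he with he'; exact he'.symm ▸ rfl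
        rw [hjj] at hμ
        simp only [Sum.elim_inr] at hag hnsp hnsn
        simp only [Sum.elim_inl]
        have hμ' : μ' i = some j := (hag i).1 hμ
        have hα := (stable_facts G h).1 i j hμ
        have hα' := (stable_facts G h').1 i j hμ'
        have hvv : v j = v' j := le_antisymm (not_lt.1 hnsn) (not_lt.1 hnsp)
        constructor <;> intro hc <;> linarith
  h7a := by
    rintro x hag hnone y hy
    cases x with
    | inl i =>
      have hμ : μ i = none := (stepFun_inl_none μ μ').1 hnone
      simp only [Sum.elim_inl] at hag
      have hμ' : μ' i = none := by rw [← hag]; exact hμ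
      cases y with
      | inl i₀ =>
        obtain ⟨j, _, hcon⟩ := (stepFun_inl_eq μ μ').1 hy
        exact absurd hcon (by simp)
      | inr j =>
        obtain ⟨i₀, hμ'', he⟩ := (stepFun_inr_eq μ μ' h'.1.1).1 hy
        have hii : i₀ = i := by injection he with he'; exact he'.symm ▸ rfl
        rw [hii, hμ'] at hμ''
        simp at hμ''
    | inr j =>
      have hμ' : ∀ i, μ' i ≠ some j := (stepFun_inr_none μ μ').1 hnone
      simp only [Sum.elim_inr] at hag
      cases y with
      | inr j₀ =>
        obtain ⟨i, _, hcon⟩ := (stepFun_inr_eq μ μ' h'.1.1).1 hy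
        exact absurd hcon (by simp)
      | inl i =>
        obtain ⟨j₀, hμ, he⟩ := (stepFun_inl_eq μ μ').1 hy
        have hjj : j₀ = j := by injection he with he'; exact he'.symm ▸ rfl
        rw [hjj] at hμ
        exact hμ' i ((hag i).1 hμ)
  h7b := by
    rintro x hag hno
    cases x with
    | inl i =>
      simp only [Sum.elim_inl] at hag
      have hμ' : μ' i = none := by
        cases hc : μ' i with
        | none => rfl
        | some j =>
          exact absurd ((stepFun_inr_eq μ μ' h'.1.1).2 ⟨i, hc, rfl⟩) (hno (Sum.inr j))
      rw [(stepFun_inl_none μ μ')]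
      rw [hag]; exact hμ'
    | inr j =>
      simp only [Sum.elim_inr] at hag
      rw [(stepFun_inr_none μ μ')]
      intro i hc
      have hμ : μ i = some j := (hag i).2 hc
      exact absurd ((stepFun_inl_eq μ μ').2 ⟨j, hμ, rfl⟩) (hno (Sum.inl i))

end GameCtx

end RiFle
namespace RiFle

namespace Ctx

variable {V : Type} [Fintype V] [DecidableEq V] (c : Ctx V)

def reach (x y : V) : Prop :=
  Relation.ReflTransGen (fun a b => c.step a = some b ∨ c.step b = some a) x y

lemma reach_refl (x : V) : c.reach x x := Relation.ReflTransGen.refl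

lemma reach_trans {x y z : V} (h1 : c.reach x y) (h2 : c.reach y z) : c.reach x z :=
  Relation.ReflTransGen.trans h1 h2

lemma reach_symm {x y : V} (h1 : c.reach x y) : c.reach y x := by
  refine (@Relation.ReflTransGen.symmetric _ (fun a b => c.step a = some b ∨ c.step b = some a) ⟨?_⟩).symm _ _ h1
  intro a b hab
  rcases hab with h | h
  · exact Or.inr h
  · exact Or.inl h

lemma reach_single {x y : V} (h1 : c.step x = some y) : c.reach x y :=
  Relation.ReflTransGen.single (Or.inl h1)

theorem main' {x y : V} (hx : c.sp x) (hr : c.reach x y) : ¬ c.sn y :=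
  c.main hx (c.linear hr)

theorem main'' {y z : V} (hy : c.sn y) (hr : c.reach y z) : ¬ c.sp z := by
  intro hsp
  exact c.main' hsp (c.reach_symm hr) hy

end Ctx

variable {n : ℕ}

section GameCtx2

variable {G : RiFle n} {μ μ' : Fin n → Option (Fin n)} {u v u' v' : Fin n → ℝ}
variable (hnd : G.NonDegenerate) (h : G.Stable μ u v) (h' : G.Stable μ' u' v')

lemma gameCtx_sp_inl (i : Fin n) : (gameCtx hnd h h').sp (Sum.inl i) ↔ u' i < u i := Iff.rfl
lemma gameCtx_sp_inr (j : Fin n) : (gameCtx hnd h h').sp (Sum.inr j) ↔ v j < v' j := Iff.rfl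
lemma gameCtx_sn_inl (i : Fin n) : (gameCtx hnd h h').sn (Sum.inl i) ↔ u i < u' i := Iff.rfl
lemma gameCtx_sn_inr (j : Fin n) : (gameCtx hnd h h').sn (Sum.inr j) ↔ v' j < v j := Iff.rfl
lemma gameCtx_step (x : Fin n ⊕ Fin n) : (gameCtx hnd h h').step x = stepFun μ μ' x := rfl

end GameCtx2

end RiFle

/-- in a non-degenerate game, stable outcomes form a lattice under
P-preferences: the componentwise join payoff (max of `u`s, min of `v`s) and meet
payoff (min of `u`s, max of `v`s) of two stable outcomes are again stable payoffs. -/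
theorem stmt11 {n : ℕ} (G : RiFle n) (hnd : G.NonDegenerate)
    (μ μ' : Fin n → Option (Fin n)) (u v u' v' : Fin n → ℝ)
    (h : G.Stable μ u v) (h' : G.Stable μ' u' v') :
    (∃ μj : Fin n → Option (Fin n),
        G.Stable μj (fun i => max (u i) (u' i)) (fun j => min (v j) (v' j))) ∧
    (∃ μm : Fin n → Option (Fin n),
        G.Stable μm (fun i => min (u i) (u' i)) (fun j => max (v j) (v' j))) := by
  classical
  open RiFle Finset in
  have hmμ : RiFle.Matching μ := h.1.1
  have hmμ' : RiFle.Matching μ' := h'.1.1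
  have facts := RiFle.stable_facts G h
  have facts' := RiFle.stable_facts G h'
  have hadjμ : ∀ i j, μ i = some j →
      (RiFle.gameCtx hnd h h').reach (Sum.inl i) (Sum.inr j) := by
    intro i j hij
    exact RiFle.Ctx.reach_single _ ((RiFle.stepFun_inl_eq μ μ').2 ⟨j, hij, rfl⟩)
  have hadjμ' : ∀ i j, μ' i = some j →
      (RiFle.gameCtx hnd h h').reach (Sum.inr j) (Sum.inl i) := by
    intro i j hij
    exact RiFle.Ctx.reach_single _ ((RiFle.stepFun_inr_eq μ μ' hmμ').2 ⟨i, hij, rfl⟩)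
  constructor
  · -- JOIN
    set A : Finset (Fin n) := Finset.univ.filter
      (fun i => ∃ x, (RiFle.gameCtx hnd h h').sp x ∧
        (RiFle.gameCtx hnd h h').reach x (Sum.inl i)) with hA
    have hAm : ∀ i, i ∈ A ↔ ∃ x, (RiFle.gameCtx hnd h h').sp x ∧
        (RiFle.gameCtx hnd h h').reach x (Sum.inl i) := by
      intro i; simp [hA]
    have hAconn : ∀ i ∈ A, ∀ z, (RiFle.gameCtx hnd h h').reach (Sum.inl i) z →
        ¬ (RiFle.gameCtx hnd h h').sn z := by
      intro i hi z hz
      obtain ⟨x, hx, hrx⟩ := (hAm i).1 hi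
      exact RiFle.Ctx.main' _ hx (RiFle.Ctx.reach_trans _ hrx hz)
    have hAnot : ∀ i, i ∉ A → ∀ z, (RiFle.gameCtx hnd h h').reach z (Sum.inl i) →
        ¬ (RiFle.gameCtx hnd h h').sp z := by
      intro i hi z hz hsp
      exact hi ((hAm i).2 ⟨z, hsp, hz⟩)
    have hSA : ∀ i ∈ A, ∀ i' j, μ i = some j → μ' i' = some j → i' ∈ A := by
      intro i hi i' j hij hij'
      obtain ⟨x, hx, hrx⟩ := (hAm i).1 hi
      exact (hAm i').2 ⟨x, hx, RiFle.Ctx.reach_trans _ hrx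
        (RiFle.Ctx.reach_trans _ (hadjμ i j hij) (hadjμ' i' j hij'))⟩
    have hSA' : ∀ i ∈ A, ∀ i' j, μ' i = some j → μ i' = some j → i' ∈ A := by
      intro i hi i' j hij' hij
      obtain ⟨x, hx, hrx⟩ := (hAm i).1 hi
      exact (hAm i').2 ⟨x, hx, RiFle.Ctx.reach_trans _ hrx
        (RiFle.Ctx.reach_trans _ (RiFle.Ctx.reach_symm _ (hadjμ' i j hij'))
          (RiFle.Ctx.reach_symm _ (hadjμ i' j hij)))⟩
    refine ⟨_, RiFle.assembly G h h' A hSA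
      (fun i => max (u i) (u' i)) (fun j => min (v j) (v' j)) ?_ ?_ ?_ ?_ ?_ ?_ ?_⟩
    · intro i hi
      constructor
      · have hns := hAconn i hi (Sum.inl i) (RiFle.Ctx.reach_refl _ _)
        rw [RiFle.gameCtx_sn_inl] at hns
        exact max_eq_left (not_lt.1 hns)
      · intro j hij
        have hns := hAconn i hi (Sum.inr j) (hadjμ i j hij)
        rw [RiFle.gameCtx_sn_inr] at hns
        exact min_eq_left (not_lt.1 hns)
    · intro i hi
      constructor
      · have hns := hAnot i hi (Sum.inl i) (RiFle.Ctx.reach_refl _ _)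
        rw [RiFle.gameCtx_sp_inl] at hns
        exact max_eq_right (not_lt.1 hns)
      · intro j hij
        have hns := hAnot i hi (Sum.inr j) (hadjμ' i j hij)
        rw [RiFle.gameCtx_sp_inr] at hns
        exact min_eq_right (not_lt.1 hns)
    · intro i; exact le_max_of_le_left (h.1.2.1 i)
    · intro j; exact le_min (h.1.2.2.1 j) (h'.1.2.2.1 j)
    · intro j h1 h2
      show min (v j) (v' j) = 0
      by_cases hc : ∃ i, μ i = some j
      · obtain ⟨i₀, hi₀⟩ := hc
        have hi₀A : i₀ ∉ A := fun hin => h1 i₀ hin hi₀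
        have hnone' : ∀ i, μ' i ≠ some j := by
          intro i₁ hi₁
          by_cases hi₁A : i₁ ∈ A
          · exact hi₀A (hSA' i₁ hi₁A i₀ j hi₁ hi₀)
          · exact h2 i₁ hi₁A hi₁
        have hv' : v' j = 0 := facts'.2.2 j hnone'
        rw [hv']
        exact min_eq_right (h.1.2.2.1 j)
      · push_neg at hc
        have hv0 : v j = 0 := facts.2.2 j hc
        rw [hv0]
        exact min_eq_left (h'.1.2.2.1 j)
    · intro i j hr
      show G.α i j ≤ max (u i) (u' i) + min (v j) (v' j)
      rcases le_total (v j) (v' j) with hvv | hvv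
      · rw [min_eq_left hvv]
        have h1 := h.2.1 i j hr
        have h2 := le_max_left (u i) (u' i)
        linarith
      · rw [min_eq_right hvv]
        have h1 := h'.2.1 i j hr
        have h2 := le_max_right (u i) (u' i)
        linarith
    · intro i j hr
      rcases h.2.2 i j hr with hc | hc
      · exact Or.inl (le_trans hc (le_max_left _ _))
      · rcases h'.2.2 i j hr with hc' | hc'
        · exact Or.inl (le_trans hc' (le_max_right _ _))
        · exact Or.inr (le_min hc hc')
  · -- MEET
    set B : Finset (Fin n) := Finset.univ.filter
      (fun i => ∃ x, (RiFle.gameCtx hnd h h').sn x ∧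
        (RiFle.gameCtx hnd h h').reach x (Sum.inl i)) with hB
    have hBm : ∀ i, i ∈ B ↔ ∃ x, (RiFle.gameCtx hnd h h').sn x ∧
        (RiFle.gameCtx hnd h h').reach x (Sum.inl i) := by
      intro i; simp [hB]
    have hBconn : ∀ i ∈ B, ∀ z, (RiFle.gameCtx hnd h h').reach (Sum.inl i) z →
        ¬ (RiFle.gameCtx hnd h h').sp z := by
      intro i hi z hz
      obtain ⟨x, hx, hrx⟩ := (hBm i).1 hi
      exact RiFle.Ctx.main'' _ hx (RiFle.Ctx.reach_trans _ hrx hz)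
    have hBnot : ∀ i, i ∉ B → ∀ z, (RiFle.gameCtx hnd h h').reach z (Sum.inl i) →
        ¬ (RiFle.gameCtx hnd h h').sn z := by
      intro i hi z hz hsn
      exact hi ((hBm i).2 ⟨z, hsn, hz⟩)
    have hSB : ∀ i ∈ B, ∀ i' j, μ i = some j → μ' i' = some j → i' ∈ B := by
      intro i hi i' j hij hij'
      obtain ⟨x, hx, hrx⟩ := (hBm i).1 hi
      exact (hBm i').2 ⟨x, hx, RiFle.Ctx.reach_trans _ hrx
        (RiFle.Ctx.reach_trans _ (hadjμ i j hij) (hadjμ' i' j hij'))⟩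
    have hSB' : ∀ i ∈ B, ∀ i' j, μ' i = some j → μ i' = some j → i' ∈ B := by
      intro i hi i' j hij' hij
      obtain ⟨x, hx, hrx⟩ := (hBm i).1 hi
      exact (hBm i').2 ⟨x, hx, RiFle.Ctx.reach_trans _ hrx
        (RiFle.Ctx.reach_trans _ (RiFle.Ctx.reach_symm _ (hadjμ' i j hij'))
          (RiFle.Ctx.reach_symm _ (hadjμ i' j hij)))⟩
    refine ⟨_, RiFle.assembly G h h' B hSB
      (fun i => min (u i) (u' i)) (fun j => max (v j) (v' j)) ?_ ?_ ?_ ?_ ?_ ?_ ?_⟩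
    · intro i hi
      constructor
      · have hns := hBconn i hi (Sum.inl i) (RiFle.Ctx.reach_refl _ _)
        rw [RiFle.gameCtx_sp_inl] at hns
        exact min_eq_left (not_lt.1 hns)
      · intro j hij
        have hns := hBconn i hi (Sum.inr j) (hadjμ i j hij)
        rw [RiFle.gameCtx_sp_inr] at hns
        exact max_eq_left (not_lt.1 hns)
    · intro i hi
      constructor
      · have hns := hBnot i hi (Sum.inl i) (RiFle.Ctx.reach_refl _ _)
        rw [RiFle.gameCtx_sn_inl] at hns
        exact min_eq_right (not_lt.1 hns)
      · intro j hij
        have hns := hBnot i hi (Sum.inr j) (hadjμ' i j hij)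
        rw [RiFle.gameCtx_sn_inr] at hns
        exact max_eq_right (not_lt.1 hns)
    · intro i; exact le_min (h.1.2.1 i) (h'.1.2.1 i)
    · intro j; exact le_max_of_le_left (h.1.2.2.1 j)
    · intro j h1 h2
      show max (v j) (v' j) = 0
      by_cases hc : ∃ i, μ i = some j
      · obtain ⟨i₀, hi₀⟩ := hc
        have hi₀B : i₀ ∉ B := fun hin => h1 i₀ hin hi₀
        have hnone' : ∀ i, μ' i ≠ some j := by
          intro i₁ hi₁
          by_cases hi₁B : i₁ ∈ B
          · exact hi₀B (hSB' i₁ hi₁B i₀ j hi₁ hi₀)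
          · exact h2 i₁ hi₁B hi₁
        have hv' : v' j = 0 := facts'.2.2 j hnone'
        have hns := hBnot i₀ hi₀B (Sum.inr j) (RiFle.Ctx.reach_symm _ (hadjμ i₀ j hi₀))
        rw [RiFle.gameCtx_sn_inr] at hns
        have hv0 : v j = 0 := le_antisymm (by rw [← hv']; exact not_lt.1 hns) (h.1.2.2.1 j)
        rw [hv0, hv']
        simp
      · push_neg at hc
        have hv0 : v j = 0 := facts.2.2 j hc
        by_cases hc' : ∃ i, μ' i = some j
        · obtain ⟨i₁, hi₁⟩ := hc'
          have hi₁B : i₁ ∈ B := by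
            by_contra hnb
            exact h2 i₁ hnb hi₁
          have hns := hBconn i₁ hi₁B (Sum.inr j) (RiFle.Ctx.reach_symm _ (hadjμ' i₁ j hi₁))
          rw [RiFle.gameCtx_sp_inr] at hns
          have hv'0 : v' j = 0 := le_antisymm (by rw [← hv0]; exact not_lt.1 hns) (h'.1.2.2.1 j)
          rw [hv0, hv'0]
          simp
        · push_neg at hc'
          rw [hv0, facts'.2.2 j hc']
          simp
    · intro i j hr
      show G.α i j ≤ min (u i) (u' i) + max (v j) (v' j)
      rcases le_total (u i) (u' i) with huu | huu
      · rw [min_eq_left huu]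
        have h1 := h.2.1 i j hr
        have h2 := le_max_left (v j) (v' j)
        linarith
      · rw [min_eq_right huu]
        have h1 := h'.2.1 i j hr
        have h2 := le_max_right (v j) (v' j)
        linarith
    · intro i j hr
      rcases h.2.2 i j hr with hc | hc
      · rcases h'.2.2 i j hr with hc' | hc'
        · exact Or.inl (le_min hc hc')
        · exact Or.inr (le_trans hc' (le_max_right _ _))
      · exact Or.inr (le_trans hc (le_max_left _ _))
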